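/- arXiv:2507.16859 — 2 statements merged into one kernel-verified Lean document; each statement's English description precedes it below -/
import Mathlib

section
/- Let P and Q be probability measures on α × β, where α is a measurable space and β is a measurable space with measurable singletons, and let f, f* : α → β be measurable functions such that all relevant disagreement sets are measurable. Let R_P(h) := (P {p | h p.1 ≠ p.2}).toReal and R_Q(h) := (Q {p | h p.1 ≠ p.2}).toReal denote 0-1 risks, and let D_P(h, h') := ((P.map Prod.fst) {x | h x ≠ h' x}).toReal and D_Q(h, h') := ((Q.map Prod.fst) {x | h x ≠ h' x}).toReal denote disparities under the respective first-coordinate marginals. Suppose d : ℝ satisfies |D_P(f, f*) − D_Q(f, f*)| ≤ d. Then R_P(f) ≤ R_Q(f) + (R_P(f*) + R_Q(f*)) + d. -/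
/-!
Both bounds are the triangle inequality for disagreement: if `f x ≠ y` then `f* x ≠ y` or
`f x ≠ f* x`, so `R_P(f) ≤ R_P(f*) + D_P(f, f*)`; and if `f x ≠ f* x` then `f x ≠ y` or
`f* x ≠ y`, so `D_Q(f, f*) ≤ R_Q(f) + R_Q(f*)`. The bound `d` bridges `D_P` and `D_Q`.
-/

open MeasureTheory

namespace MeasureTheory.Measure

variable {α β : Type*} [MeasurableSpace α] [MeasurableSpace β]

/-- `R_μ(h)` -/
noncomputable def zeroOneRisk (μ : Measure (α × β)) (h : α → β) : ℝ :=
  μ.real {p | h p.1 ≠ p.2}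

/-- `D_ν(h, h')` -/
noncomputable def disparity (ν : Measure α) (h h' : α → β) : ℝ :=
  ν.real {x | h x ≠ h' x}

theorem measureReal_le_add_of_subset_union {γ : Type*} [MeasurableSpace γ] (μ : Measure γ)
    [IsFiniteMeasure μ] {s t u : Set γ} (h : s ⊆ t ∪ u) : μ.real s ≤ μ.real t + μ.real u :=
  (measureReal_mono h).trans (measureReal_union_le t u)

theorem zeroOneRisk_le_add_disparity (μ : Measure (α × β)) [IsFiniteMeasure μ] (h h' : α → β) :
    μ.zeroOneRisk h ≤ μ.zeroOneRisk h' + (μ.map Prod.fst).disparity h h' := by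
  -- `μ (fst ⁻¹' s) ≤ μ.map fst s` holds for every `s`, so the disagreement set need not be measurable
  have hmarginal : μ.real (Prod.fst ⁻¹' {x | h x ≠ h' x})
      ≤ (μ.map Prod.fst).disparity h h' :=
    ENNReal.toReal_mono (measure_ne_top _ _) (le_map_apply measurable_fst.aemeasurable _)
  have hsplit : μ.zeroOneRisk h
      ≤ μ.zeroOneRisk h' + μ.real (Prod.fst ⁻¹' {x | h x ≠ h' x}) :=
    measureReal_le_add_of_subset_union μ fun p hp => by
      by_cases hp' : h' p.1 = p.2
      · exact Or.inr fun heq => hp (heq.trans hp')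
      · exact Or.inl hp'
  linarith

theorem disparity_map_fst_le_add_zeroOneRisk (μ : Measure (α × β)) [IsFiniteMeasure μ]
    {h h' : α → β} (hdis : MeasurableSet {x | h x ≠ h' x}) :
    (μ.map Prod.fst).disparity h h' ≤ μ.zeroOneRisk h + μ.zeroOneRisk h' := by
  rw [disparity, map_measureReal_apply measurable_fst hdis]
  refine measureReal_le_add_of_subset_union μ fun p hp => ?_
  by_cases hp' : h p.1 = p.2
  · exact Or.inr fun hp'' => hp (hp'.trans hp''.symm)
  · exact Or.inl hp'

end MeasureTheory.Measure

theorem risk_bound_via_ideal_classifier_general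
    {α β : Type*} [MeasurableSpace α] [MeasurableSpace β]
    (P Q : Measure (α × β)) [IsProbabilityMeasure P] [IsProbabilityMeasure Q]
    (f fstar : α → β)
    (hdis : MeasurableSet {x : α | f x ≠ fstar x})
    (d : ℝ)
    (hd : |((P.map Prod.fst) {x : α | f x ≠ fstar x}).toReal
            - ((Q.map Prod.fst) {x : α | f x ≠ fstar x}).toReal| ≤ d) :
    (P {p : α × β | f p.1 ≠ p.2}).toReal
      ≤ (Q {p : α × β | f p.1 ≠ p.2}).toReal
        + ((P {p : α × β | fstar p.1 ≠ p.2}).toReal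
            + (Q {p : α × β | fstar p.1 ≠ p.2}).toReal)
        + d := by
  have hP : P.zeroOneRisk f ≤ P.zeroOneRisk fstar + (P.map Prod.fst).disparity f fstar :=
    Measure.zeroOneRisk_le_add_disparity P f fstar
  have hQ : (Q.map Prod.fst).disparity f fstar ≤ Q.zeroOneRisk f + Q.zeroOneRisk fstar :=
    Measure.disparity_map_fst_le_add_zeroOneRisk Q hdis
  have hshift : (P.map Prod.fst).disparity f fstar ≤ (Q.map Prod.fst).disparity f fstar + d :=
    sub_le_iff_le_add'.mp (le_of_abs_le hd)
  simp only [Measure.zeroOneRisk, Measure.disparity, measureReal_def] at hP hQ hshift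
  linarith

/-- Target-risk bound via an ideal joint classifier: the 0-1 risk of `f` under `P` is
bounded by its risk under `Q`, plus the ideal joint risk of `f*`, plus a bound `d` on
the difference of the disparities of `f` and `f*` under the two input marginals. -/
theorem risk_bound_via_ideal_classifier
    {α β : Type*} [MeasurableSpace α] [MeasurableSpace β] [MeasurableSingletonClass β]
    (P Q : Measure (α × β)) [IsProbabilityMeasure P] [IsProbabilityMeasure Q]
    (f fstar : α → β) (hf : Measurable f) (hfstar : Measurable fstar)
    (hfP : MeasurableSet {p : α × β | f p.1 ≠ p.2})
    (hfstarP : MeasurableSet {p : α × β | fstar p.1 ≠ p.2})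
    (hdis : MeasurableSet {x : α | f x ≠ fstar x})
    (d : ℝ)
    (hd : |((P.map Prod.fst) {x : α | f x ≠ fstar x}).toReal
            - ((Q.map Prod.fst) {x : α | f x ≠ fstar x}).toReal| ≤ d) :
    (P {p : α × β | f p.1 ≠ p.2}).toReal
      ≤ (Q {p : α × β | f p.1 ≠ p.2}).toReal
        + ((P {p : α × β | fstar p.1 ≠ p.2}).toReal
            + (Q {p : α × β | fstar p.1 ≠ p.2}).toReal)
        + d :=
  risk_bound_via_ideal_classifier_general P Q f fstar hdis d hd
end

section
/- Let μ be a probability measure on a measurable space α, and let ν₁, ν₂ be probability measures on a measurable space β. Suppose ε : ℝ satisfies |(ν₁ B).toReal − (ν₂ B).toReal| ≤ ε for every measurable set B ⊆ β. Then for every measurable set S ⊆ α × β, |((μ.prod ν₁) S).toReal − ((μ.prod ν₂) S).toReal| ≤ ε. In particular, for any two classifiers f, f' : α × β → γ with measurable disagreement set S = {p | f p ≠ f' p}, the disparity of f and f' under the joint distribution of (x, a) with x ~ μ, a ~ ν₁ independent, and under the joint distribution of (x, â) with x ~ μ, â ~ ν₂ independent, differ by at most ε. -/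
open MeasureTheory

namespace MeasureTheory.Measure

variable {α β : Type*} [MeasurableSpace α] [MeasurableSpace β]

theorem measureReal_prod_apply (μ : Measure α) (ν : Measure β) [IsFiniteMeasure ν]
    {s : Set (α × β)} (hs : MeasurableSet s) :
    (μ.prod ν).real s = ∫ x, ν.real (Prod.mk x ⁻¹' s) ∂μ := by
  rw [measureReal_def, prod_apply hs, ← integral_toReal
    (measurable_measure_prodMk_left hs).aemeasurable (ae_of_all _ fun _ ↦ measure_lt_top _ _)]
  rfl

theorem abs_measureReal_prod_sub_le (μ : Measure α) [IsFiniteMeasure μ]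
    (ν₁ ν₂ : Measure β) [IsFiniteMeasure ν₁] [IsFiniteMeasure ν₂] {ε : ℝ}
    (hε : ∀ B : Set β, MeasurableSet B → |ν₁.real B - ν₂.real B| ≤ ε)
    {s : Set (α × β)} (hs : MeasurableSet s) :
    |(μ.prod ν₁).real s - (μ.prod ν₂).real s| ≤ ε * μ.real Set.univ := by
  rw [measureReal_prod_apply μ ν₁ hs, measureReal_prod_apply μ ν₂ hs,
    ← integral_sub (integrable_measure_prodMk_left hs (measure_ne_top _ _))
      (integrable_measure_prodMk_left hs (measure_ne_top _ _))]
  exact norm_integral_le_of_norm_le_const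
    (ae_of_all _ fun _ ↦ (Real.norm_eq_abs _).trans_le (hε _ (measurable_prodMk_left hs)))

end MeasureTheory.Measure

/-- If the distributions of the true sensor `ν₁` and the generated sensor `ν₂` differ by at
most `ε` on every measurable set, then the corresponding independent joint distributions
with a common input distribution `μ` differ by at most `ε` on every measurable set; in
particular, the disparity of any two classifiers under the two joint distributions differs
by at most `ε`. -/
theorem prod_measure_abs_diff_le_of_abs_diff_le
    {α β γ : Type*} [MeasurableSpace α] [MeasurableSpace β]
    (μ : Measure α) [IsProbabilityMeasure μ]
    (ν₁ ν₂ : Measure β) [IsProbabilityMeasure ν₁] [IsProbabilityMeasure ν₂]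
    (ε : ℝ)
    (hε : ∀ B : Set β, MeasurableSet B → |(ν₁ B).toReal - (ν₂ B).toReal| ≤ ε) :
    (∀ S : Set (α × β), MeasurableSet S →
        |((μ.prod ν₁) S).toReal - ((μ.prod ν₂) S).toReal| ≤ ε) ∧
      (∀ f f' : α × β → γ, MeasurableSet {p : α × β | f p ≠ f' p} →
        |((μ.prod ν₁) {p : α × β | f p ≠ f' p}).toReal
            - ((μ.prod ν₂) {p : α × β | f p ≠ f' p}).toReal| ≤ ε) := by
  have prod_close : ∀ S : Set (α × β), MeasurableSet S →
      |((μ.prod ν₁) S).toReal - ((μ.prod ν₂) S).toReal| ≤ ε := fun S hS ↦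
    (Measure.abs_measureReal_prod_sub_le μ ν₁ ν₂ hε hS).trans_eq (by rw [probReal_univ, mul_one])
  exact ⟨prod_close, fun f f' ↦ prod_close _⟩
end
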